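/- arXiv:math-ph/9910017 — 4 statements merged into one kernel-verified Lean document; each statement's English description precedes it below -/
import Mathlib

section
/- For each n ≥ 2, the concatenation identity s_n s_{n+1} = s_{n+1} s_{n-1}^{a_n - 1} s_{n-2} s_{n-1} holds, where the words s_n over the alphabet {0,1} are defined by s_{-1} = 1, s_0 = 0, s_1 = s_0^{a_1-1} s_{-1}, and s_n = s_{n-1}^{a_n} s_{n-2} for n ≥ 2. -/
/-- k-fold concatenation of a word with itself. -/
def wpow (w : List ℕ) (k : ℕ) : List ℕ := (List.replicate k w).flatten

lemma wpow_succ (w : List ℕ) (k : ℕ) : wpow w (k + 1) = w ++ wpow w k := by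
  simp [wpow, List.replicate_succ]

lemma append_wpow_comm (w : List ℕ) (k : ℕ) : w ++ wpow w k = wpow w k ++ w := by
  induction k with
  | zero => simp [wpow]
  | succ k ih => rw [wpow_succ, List.append_assoc, ← ih]

/-- `u := x^k y` commutes with `u^m`, and `u x = x (x^(k-1) y x)`. -/
lemma append_wpow_append_eq (x y : List ℕ) {k : ℕ} (hk : 1 ≤ k) (m : ℕ) :
    (wpow x k ++ y) ++ (wpow (wpow x k ++ y) m ++ x) =
      (wpow (wpow x k ++ y) m ++ x) ++ wpow x (k - 1) ++ y ++ x := by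
  obtain ⟨j, rfl⟩ := Nat.exists_eq_add_of_le' hk
  set u := wpow x (j + 1) ++ y
  calc u ++ (wpow u m ++ x)
      = wpow u m ++ (u ++ x) := by rw [← List.append_assoc, append_wpow_comm, List.append_assoc]
    _ = wpow u m ++ x ++ wpow x j ++ y ++ x := by simp only [u, wpow_succ, List.append_assoc]
    _ = _ := rfl

theorem sturmian_word_identity_general
    (a : ℤ → ℕ) (s : ℤ → List ℕ)
    (ha : ∀ n : ℤ, 1 ≤ n → 1 ≤ a n)
    (hrec : ∀ n : ℤ, 2 ≤ n → s n = wpow (s (n-1)) (a n) ++ s (n-2)) :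
    ∀ n : ℤ, 2 ≤ n →
      s n ++ s (n+1) =
        s (n+1) ++ wpow (s (n-1)) (a n - 1) ++ s (n-2) ++ s (n-1) := by
  intro n hn
  have hsucc : s (n + 1) = wpow (s n) (a (n + 1)) ++ s (n - 1) := by
    have h := hrec (n + 1) (by omega)
    rwa [add_sub_cancel_right, show n + 1 - 2 = n - 1 by ring] at h
  rw [hsucc, hrec n hn]
  exact append_wpow_append_eq _ _ (ha n (by omega)) _

theorem sturmian_word_identity
    (a : ℤ → ℕ) (s : ℤ → List ℕ)
    (ha : ∀ n : ℤ, 1 ≤ n → 1 ≤ a n)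
    (hm1 : s (-1) = [1]) (h0 : s 0 = [0])
    (h1 : s 1 = wpow (s 0) (a 1 - 1) ++ s (-1))
    (hrec : ∀ n : ℤ, 2 ≤ n → s n = wpow (s (n-1)) (a n) ++ s (n-2)) :
    ∀ n : ℤ, 2 ≤ n →
      s n ++ s (n+1) =
        s (n+1) ++ wpow (s (n-1)) (a n - 1) ++ s (n-2) ++ s (n-1) :=
  sturmian_word_identity_general a s ha hrec
end

section
/- Let (U(n))_{n≥1} be a sequence of vectors in ℝ², and suppose there are integers k ≥ 1, l with 1 ≤ l ≤ k, and a constant C ≥ 1 such that for every j ∈ {1,…,l}, max(‖U(j+k)‖, ‖U(j+2k)‖) ≥ ‖U(j)‖/(2C). Then Σ_{m=1}^{l+2k} ‖U(m)‖² ≥ (1 + 1/(4C²)) Σ_{m=1}^{l} ‖U(m)‖². -/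
open Finset

theorem sq_le_sq_add_sq_of_le_max {R : Type*} [CommRing R] [LinearOrder R] [IsStrictOrderedRing R]
    {x a b : R} (hx : 0 ≤ x) (h : x ≤ max a b) : x ^ 2 ≤ a ^ 2 + b ^ 2 := by
  rcases le_max_iff.mp h with ha | hb
  · nlinarith [sq_nonneg b]
  · nlinarith [sq_nonneg a]

theorem Finset.sum_Icc_add' {M : Type*} [AddCommMonoid M] (f : ℕ → M) (a b c : ℕ) :
    ∑ x ∈ Icc a b, f (x + c) = ∑ x ∈ Icc (a + c) (b + c), f x := by
  rw [← map_add_right_Icc, sum_map]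
  rfl

/-- The windows `[1, l]`, `[1, l] + k` and `[1, l] + 2k` are disjoint as soon as `l ≤ k`. -/
theorem sum_add_sum_translates_le {M : Type*} [AddCommMonoid M] [PartialOrder M]
    [IsOrderedAddMonoid M] {f : ℕ → M} (hf : ∀ m, 0 ≤ f m) {k l : ℕ} (hlk : l ≤ k) :
    ∑ j ∈ Icc 1 l, (f j + (f (j + k) + f (j + 2 * k))) ≤ ∑ m ∈ Icc 1 (l + 2 * k), f m := by
  have hdisj₁ : Disjoint (Icc (1 + k) (l + k)) (Icc (1 + 2 * k) (l + 2 * k)) := by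
    rw [disjoint_left]; intro m hm hm'; simp only [mem_Icc] at hm hm'; omega
  have hdisj₀ : Disjoint (Icc 1 l) (Icc (1 + k) (l + k) ∪ Icc (1 + 2 * k) (l + 2 * k)) := by
    rw [disjoint_left]; intro m hm hm'; simp only [mem_Icc, mem_union] at hm hm'; omega
  rw [sum_add_distrib, sum_add_distrib, sum_Icc_add', sum_Icc_add', ← sum_union hdisj₁,
    ← sum_union hdisj₀]
  refine sum_le_sum_of_subset_of_nonneg ?_ fun m _ _ => hf m
  intro m hm
  simp only [mem_Icc, mem_union] at hm ⊢
  omega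

theorem mass_reproduction_general
    (U : ℕ → EuclideanSpace ℝ (Fin 2))
    (k l : ℕ) (hlk : l ≤ k)
    (C : ℝ) (hC : 1 ≤ C)
    (h : ∀ j ∈ Finset.Icc 1 l, ‖U j‖ / (2 * C) ≤ max ‖U (j + k)‖ ‖U (j + 2 * k)‖) :
    (1 + 1 / (4 * C ^ 2)) * ∑ m ∈ Finset.Icc 1 l, ‖U m‖ ^ 2 ≤
      ∑ m ∈ Finset.Icc 1 (l + 2 * k), ‖U m‖ ^ 2 := by
  have hC₀ : 0 < C := by linarith
  have hpoint : ∀ j ∈ Icc 1 l, ‖U j‖ ^ 2 / (4 * C ^ 2) ≤ ‖U (j + k)‖ ^ 2 + ‖U (j + 2 * k)‖ ^ 2 := by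
    intro j hj
    have hsq : ‖U j‖ ^ 2 / (4 * C ^ 2) = (‖U j‖ / (2 * C)) ^ 2 := by ring
    rw [hsq]
    exact sq_le_sq_add_sq_of_le_max (by positivity) (h j hj)
  calc (1 + 1 / (4 * C ^ 2)) * ∑ m ∈ Icc 1 l, ‖U m‖ ^ 2
      = ∑ j ∈ Icc 1 l, (‖U j‖ ^ 2 + ‖U j‖ ^ 2 / (4 * C ^ 2)) := by
        rw [mul_sum]; congr 1; ext j; ring
    _ ≤ ∑ j ∈ Icc 1 l, (‖U j‖ ^ 2 + (‖U (j + k)‖ ^ 2 + ‖U (j + 2 * k)‖ ^ 2)) :=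
        sum_le_sum fun j hj => add_le_add_right (hpoint j hj) _
    _ ≤ ∑ m ∈ Icc 1 (l + 2 * k), ‖U m‖ ^ 2 :=
        sum_add_sum_translates_le (fun m => sq_nonneg ‖U m‖) hlk

theorem mass_reproduction
    (U : ℕ → EuclideanSpace ℝ (Fin 2))
    (k l : ℕ) (hk : 1 ≤ k) (hl1 : 1 ≤ l) (hlk : l ≤ k)
    (C : ℝ) (hC : 1 ≤ C)
    (h : ∀ j ∈ Finset.Icc 1 l, ‖U j‖ / (2 * C) ≤ max ‖U (j + k)‖ ‖U (j + 2 * k)‖) :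
    (1 + 1 / (4 * C ^ 2)) * ∑ m ∈ Finset.Icc 1 l, ‖U m‖ ^ 2 ≤
      ∑ m ∈ Finset.Icc 1 (l + 2 * k), ‖U m‖ ^ 2 :=
  mass_reproduction_general U k l hlk C hC h
end

section
/- Let m⁺, m⁻ ∈ ℂ with Im(m⁺) > 0 and Im(m⁻) > 0, and suppose that for all φ ∈ ℝ, |(sin φ + cos φ · m⁺)/(cos φ - sin φ · m⁺)| ≤ K for some K ≥ 1. Then |(m⁺ + m⁻)/(1 - m⁺ m⁻)| ≤ K. -/
/-!
Substituting `z = exp (2 i φ)` turns the quotient in the hypothesis into a Möbius function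
`F z = ((1 + i m⁺) z + (i m⁺ - 1)) / ((i - m⁺) z + (i + m⁺))`, and the hypothesis says
`‖F‖ ≤ K` on the unit circle. Since `Im m⁺ > 0`, the pole of `F` lies outside the closed unit
disk, so by the maximum modulus principle `‖F‖ ≤ K` on the whole disk. Since `Im m⁻ > 0`, the
point `z = (i - m⁻) / (i + m⁻)` lies in the disk, and `F` takes there the value
`(m⁺ + m⁻) / (1 - m⁺ m⁻)`.
-/

open Complex Metric

theorem Complex.norm_I_sub_lt_norm_I_add {m : ℂ} (hm : 0 < m.im) : ‖I - m‖ < ‖I + m‖ := by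
  rw [← sq_lt_sq₀ (norm_nonneg _) (norm_nonneg _), Complex.sq_norm, Complex.sq_norm,
    normSq_apply, normSq_apply]
  simp only [sub_re, sub_im, add_re, add_im, I_re, I_im]
  nlinarith

noncomputable def moebiusMap (a b c d z : ℂ) : ℂ := (a * z + b) / (c * z + d)

theorem differentiableOn_moebiusMap {a b c d : ℂ} (hcd : ‖c‖ < ‖d‖) :
    DifferentiableOn ℂ (moebiusMap a b c d) (closedBall 0 1) := by
  intro z hz
  have hden : c * z + d ≠ 0 := by
    intro h
    have : ‖d‖ ≤ ‖c‖ := calc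
      ‖d‖ = ‖c * z‖ := by rw [eq_neg_of_add_eq_zero_right h, norm_neg]
      _ ≤ ‖c‖ := by
        rw [norm_mul]
        exact mul_le_of_le_one_right (norm_nonneg c) (mem_closedBall_zero_iff.mp hz)
    exact this.not_gt hcd
  unfold moebiusMap
  fun_prop (disch := exact hden)

theorem norm_le_of_forall_norm_exp_mul_I_le {E : Type*} [NormedAddCommGroup E]
    [NormedSpace ℂ E] {f : ℂ → E} (hf : DifferentiableOn ℂ f (closedBall 0 1)) {K : ℝ}
    (hK : ∀ θ : ℝ, ‖f (exp (θ * I))‖ ≤ K) {z : ℂ} (hz : ‖z‖ ≤ 1) : ‖f z‖ ≤ K := by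
  refine norm_le_of_forall_mem_frontier_norm_le (isBounded_ball (x := 0) (r := 1)) ?_
    (fun w hw => ?_) ?_
  · exact DifferentiableOn.diffContOnCl (by rwa [closure_ball 0 one_ne_zero])
  · rw [frontier_ball 0 one_ne_zero, mem_sphere_zero_iff_norm] at hw
    have hexp : exp (arg w * I) = w := by simpa [hw] using norm_mul_exp_arg_mul_I w
    simpa only [hexp] using hK (arg w)
  · rwa [closure_ball 0 one_ne_zero, mem_closedBall_zero_iff]

theorem sin_add_cos_mul_div_cos_sub_sin_mul (x m : ℂ) :
    (sin x + cos x * m) / (cos x - sin x * m)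
      = moebiusMap (1 + I * m) (I * m - 1) (I - m) (I + m) (exp (2 * x * I)) := by
  set u := exp (x * I)
  have hu : u ≠ 0 := exp_ne_zero _
  have hinv : exp (-x * I) = u⁻¹ := by rw [neg_mul, exp_neg]
  have hsq : exp (2 * x * I) = u ^ 2 := by rw [← exp_nat_mul]; ring_nf
  have hs : sin x = (u⁻¹ - u) * I / 2 := by rw [← hinv, ← two_sin]; ring
  have hc : cos x = (u + u⁻¹) / 2 := by rw [← hinv, ← two_cos]; ring
  rw [moebiusMap, hsq, hs, hc,
    ← mul_div_mul_left _ _ (mul_ne_zero (mul_ne_zero two_ne_zero hu) I_ne_zero)]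
  congr 1
  · field_simp
    linear_combination (1 - u ^ 2) * I_sq
  · field_simp
    linear_combination (u ^ 2 - 1) * m * I_sq

theorem moebiusMap_I_sub_div_I_add (p m : ℂ) (hm : I + m ≠ 0) :
    moebiusMap (1 + I * p) (I * p - 1) (I - p) (I + p) ((I - m) / (I + m))
      = (p + m) / (1 - p * m) := by
  rw [moebiusMap, ← mul_div_mul_left _ _ hm,
    ← mul_div_mul_left (p + m) _ (neg_ne_zero.mpr (two_ne_zero (α := ℂ)))]
  congr 1
  · field_simp
    linear_combination 2 * p * I_sq
  · field_simp
    linear_combination 2 * I_sq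

theorem m_function_bound_general
    (mp mm : ℂ) (hmp : 0 < mp.im) (hmm : 0 < mm.im)
    (K : ℝ)
    (hbd : ∀ φ : ℝ,
      ‖(Real.sin φ + Real.cos φ * mp) / (Real.cos φ - Real.sin φ * mp)‖ ≤ K) :
    ‖(mp + mm) / (1 - mp * mm)‖ ≤ K := by
  have hcircle (θ : ℝ) :
      ‖moebiusMap (1 + I * mp) (I * mp - 1) (I - mp) (I + mp) (exp (θ * I))‖ ≤ K := by
    have hθ : 2 * ((θ / 2 : ℝ) : ℂ) = θ := by push_cast; ring
    simpa only [ofReal_sin, ofReal_cos, sin_add_cos_mul_div_cos_sub_sin_mul, hθ]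
      using hbd (θ / 2)
  have hmm' := norm_I_sub_lt_norm_I_add hmm
  have hz : ‖(I - mm) / (I + mm)‖ ≤ 1 := by
    rw [norm_div]
    exact div_le_one_of_le₀ hmm'.le (norm_nonneg _)
  have hI : I + mm ≠ 0 := norm_pos_iff.mp ((norm_nonneg _).trans_lt hmm')
  rw [← moebiusMap_I_sub_div_I_add mp mm hI]
  exact norm_le_of_forall_norm_exp_mul_I_le
    (differentiableOn_moebiusMap (norm_I_sub_lt_norm_I_add hmp)) hcircle hz

theorem m_function_bound
    (mp mm : ℂ) (hmp : 0 < mp.im) (hmm : 0 < mm.im)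
    (K : ℝ) (hK : 1 ≤ K)
    (hbd : ∀ φ : ℝ,
      ‖(Real.sin φ + Real.cos φ * mp) / (Real.cos φ - Real.sin φ * mp)‖ ≤ K) :
    ‖(mp + mm) / (1 - mp * mm)‖ ≤ K :=
  m_function_bound_general mp mm hmp hmm K hbd
end

section
/- Let w be a finite word over {0,1} of length k, and suppose a two-sided sequence f : ℤ → {0,1} satisfies f(j) f(j+1) ⋯ f(j+2k-1) = w' w' for some cyclic permutation (conjugate) w' of w, for every j ∈ {1,…,l} with l ≤ k. Let M(w) denote the transfer matrix product over w at fixed (λ, E) with |tr M(w')| ≤ C for every conjugate w' of w, where C ≥ 1. If u : ℤ → ℂ solves u(n+1) + u(n-1) + λ f(n) u(n) = E u(n), then ‖U‖_{l+2k}² ≥ (1 + 1/(4C²)) ‖U‖_l², where U(n) = (u(n), u(n-1)) and ‖U‖_m² = Σ_{n=1}^m ‖U(n)‖². -/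
/-!
If the window of length `2k` starting at `j` is a square `w'w'` with `|w'| = k`, then the state
vectors `U(j)`, `U(j+k)`, `U(j+2k)` are related by the same unimodular matrix `M = M(w')` twice,
and Cayley–Hamilton (`M² = tr M · M - 1`) gives `U(j) = tr M · U(j+k) - U(j+2k)`. Hence
`‖U(j)‖² ≤ 2C² (‖U(j+k)‖² + ‖U(j+2k)‖²)`. Since `l ≤ k`, the shifted ranges `[1+k, l+k]` and
`[1+2k, l+2k]` are disjoint subsets of `[l+1, l+2k]`, so summing over `j ∈ [1, l]` bounds
`‖U‖_l²` by `2C²` times the mass on `[l+1, l+2k]`.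
-/

/-- Single-site transfer matrix. -/
def Tmat (lam E : ℝ) (c : ℕ) : Matrix (Fin 2) (Fin 2) ℝ :=
  !![E - lam * c, -1; 1, 0]

/-- Transfer matrix over a word, multiplied right to left. -/
def Mword (lam E : ℝ) (w : List ℕ) : Matrix (Fin 2) (Fin 2) ℝ :=
  (w.reverse.map (Tmat lam E)).prod

open Finset Matrix

theorem Matrix.mul_self_eq_trace_smul_sub_one_of_det_eq_one {R : Type*} [CommRing R]
    {M : Matrix (Fin 2) (Fin 2) R} (hM : M.det = 1) : M * M = M.trace • M - 1 := by
  nontriviality R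
  have hCH := M.aeval_self_charpoly
  simp only [charpoly_fin_two, hM, map_add, map_sub, map_pow, Polynomial.aeval_X,
    Polynomial.aeval_C, map_mul, ← Algebra.smul_def, map_one] at hCH
  rw [← sq, eq_sub_iff_add_eq, ← sub_eq_zero, ← hCH]
  abel

theorem norm_sq_le_of_eq_smul_sub {F : Type*} [SeminormedAddCommGroup F] [NormedSpace ℝ F]
    {a b c : F} {t C : ℝ} (hC : 1 ≤ C) (ht : |t| ≤ C) (h : a = t • b - c) :
    ‖a‖ ^ 2 ≤ 2 * C ^ 2 * (‖b‖ ^ 2 + ‖c‖ ^ 2) := by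
  have hle : ‖a‖ ≤ C * ‖b‖ + ‖c‖ := calc
    ‖a‖ ≤ ‖t • b‖ + ‖c‖ := h ▸ norm_sub_le _ _
    _ = |t| * ‖b‖ + ‖c‖ := by rw [norm_smul, Real.norm_eq_abs]
    _ ≤ C * ‖b‖ + ‖c‖ := by gcongr
  nlinarith [norm_nonneg a, norm_nonneg b, norm_nonneg c, sq_nonneg (C * ‖b‖ - ‖c‖),
    mul_le_mul_of_nonneg_right (one_le_pow₀ (n := 2) hC) (sq_nonneg ‖c‖)]

theorem sum_Icc_le_mul_sum_Icc_of_le_shifts {N : ℤ → ℝ} (hN : ∀ n, 0 ≤ N n) {A : ℝ}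
    (hA : 0 ≤ A) {a b k : ℤ} (hk : b - a < k)
    (h : ∀ j ∈ Icc a b, N j ≤ A * (N (j + k) + N (j + 2 * k))) :
    ∑ j ∈ Icc a b, N j ≤ A * ∑ n ∈ Icc (b + 1) (b + 2 * k), N n := by
  have shift (c : ℤ) : ∑ j ∈ Icc a b, N (j + c) = ∑ n ∈ Icc (a + c) (b + c), N n := by
    rw [← map_add_right_Icc, sum_map]
    rfl
  have hdisj : Disjoint (Icc (a + k) (b + k)) (Icc (a + 2 * k) (b + 2 * k)) := by
    rw [disjoint_left]
    intro x hx hx'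
    rw [mem_Icc] at hx hx'
    omega
  have hsub : Icc (a + k) (b + k) ∪ Icc (a + 2 * k) (b + 2 * k) ⊆ Icc (b + 1) (b + 2 * k) := by
    intro x hx
    rw [mem_union, mem_Icc, mem_Icc] at hx
    rw [mem_Icc]
    omega
  calc ∑ j ∈ Icc a b, N j
      ≤ ∑ j ∈ Icc a b, A * (N (j + k) + N (j + 2 * k)) := sum_le_sum h
    _ = A * ∑ n ∈ Icc (a + k) (b + k) ∪ Icc (a + 2 * k) (b + 2 * k), N n := by
      rw [← mul_sum, sum_add_distrib, shift, shift, sum_union hdisj]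
    _ ≤ A * ∑ n ∈ Icc (b + 1) (b + 2 * k), N n :=
      mul_le_mul_of_nonneg_left (sum_le_sum_of_subset_of_nonneg hsub fun n _ _ => hN n) hA

theorem sum_Icc_add_sum_Icc_succ {M : Type*} [AddCommMonoid M] {N : ℤ → M} {a b c : ℤ}
    (hab : a ≤ b + 1) (hbc : b ≤ c) :
    ∑ n ∈ Icc a b, N n + ∑ n ∈ Icc (b + 1) c, N n = ∑ n ∈ Icc a c, N n := by
  have hdisj : Disjoint (Icc a b) (Icc (b + 1) c) := by
    rw [disjoint_left]
    intro n hn hn'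
    rw [mem_Icc] at hn hn'
    omega
  rw [← sum_union hdisj]
  congr 1
  ext n
  simp only [mem_union, mem_Icc]
  omega

def subword (f : ℤ → ℕ) (j : ℤ) (n : ℕ) : List ℕ :=
  List.ofFn fun m : Fin n => f (j + (m : ℕ))

@[simp]
theorem length_subword (f : ℤ → ℕ) (j : ℤ) (n : ℕ) : (subword f j n).length = n := by
  simp [subword]

theorem subword_add (f : ℤ → ℕ) (j : ℤ) (a b : ℕ) :
    subword f j (a + b) = subword f j a ++ subword f (j + a) b := by
  simp only [subword, List.ofFn_add, Fin.val_castLE, Fin.val_natAdd, Nat.cast_add, add_assoc]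

def stateVec (u : ℤ → ℂ) (n : ℤ) : Fin 2 → ℂ := ![u n, u (n - 1)]

noncomputable def stateNormSq (u : ℤ → ℂ) (n : ℤ) : ℝ := ‖u n‖ ^ 2 + ‖u (n - 1)‖ ^ 2

section Transfer

variable (lam E : ℝ)

theorem Mword_append (L₁ L₂ : List ℕ) :
    Mword lam E (L₁ ++ L₂) = Mword lam E L₂ * Mword lam E L₁ := by
  simp [Mword]

theorem det_Mword (L : List ℕ) : (Mword lam E L).det = 1 := by
  induction L with
  | nil => simp [Mword]
  | cons c L ih =>
    rw [← List.singleton_append, Mword_append, det_mul, ih, one_mul]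
    simp [Mword, Tmat, det_fin_two_of]

variable {lam E} {f : ℤ → ℕ} {u : ℤ → ℂ}
  (hsol : ∀ n : ℤ, u (n + 1) + u (n - 1) + (lam : ℂ) * (f n : ℂ) * u n = (E : ℂ) * u n)
include hsol

theorem stateVec_add_one (n : ℤ) :
    stateVec u (n + 1) = Complex.ofRealHom.mapMatrix (Tmat lam E (f n)) *ᵥ stateVec u n := by
  have hnext : u (n + 1) = (E - lam * f n) * u n - u (n - 1) := by linear_combination hsol n
  ext i
  fin_cases i <;> simp [stateVec, Tmat, mulVec_fin_two, hnext, sub_eq_add_neg]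

theorem stateVec_add (j : ℤ) (n : ℕ) :
    stateVec u (j + n) =
      Complex.ofRealHom.mapMatrix (Mword lam E (subword f j n)) *ᵥ stateVec u j := by
  induction n with
  | zero => simp [subword, Mword]
  | succ n ih =>
    have hlast : Mword lam E (subword f j (n + 1)) =
        Tmat lam E (f (j + n)) * Mword lam E (subword f j n) := by
      rw [subword_add, Mword_append]
      simp [subword, Mword]
    rw [Nat.cast_succ, ← add_assoc, stateVec_add_one hsol, ih, hlast, map_mul, mulVec_mulVec]

theorem stateVec_eq_trace_smul_sub {j : ℤ} {r : List ℕ}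
    (hr : subword f j (2 * r.length) = r ++ r) :
    stateVec u j = (Mword lam E r).trace • stateVec u (j + r.length)
      - stateVec u (j + 2 * r.length) := by
  rw [two_mul, subword_add] at hr
  obtain ⟨hfirst, hsecond⟩ := List.append_inj hr (length_subword _ _ _)
  set M := Complex.ofRealHom.mapMatrix (Mword lam E r)
  have hstep1 : stateVec u (j + r.length) = M *ᵥ stateVec u j := by
    rw [stateVec_add hsol, hfirst]
  have hstep2 : stateVec u (j + 2 * r.length) = M *ᵥ stateVec u (j + r.length) := by
    rw [show j + 2 * (r.length : ℤ) = j + r.length + r.length by ring, stateVec_add hsol, hsecond]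
  have hdet : M.det = 1 := by
    rw [← RingHom.map_det, det_Mword, map_one]
  have htrace : M.trace = (Mword lam E r).trace :=
    (AddMonoidHom.map_trace Complex.ofRealHom _).symm
  rw [hstep2, hstep1, mulVec_mulVec, mul_self_eq_trace_smul_sub_one_of_det_eq_one hdet,
    sub_mulVec, smul_mulVec, one_mulVec, htrace, Complex.coe_smul, sub_sub_cancel]

theorem stateNormSq_le_of_square {C : ℝ} (hC : 1 ≤ C) {j : ℤ} {r : List ℕ}
    (htr : |(Mword lam E r).trace| ≤ C) (hr : subword f j (2 * r.length) = r ++ r) :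
    stateNormSq u j ≤
      2 * C ^ 2 * (stateNormSq u (j + r.length) + stateNormSq u (j + 2 * r.length)) := by
  have hrel := stateVec_eq_trace_smul_sub hsol hr
  have h0 := norm_sq_le_of_eq_smul_sub hC htr (congrFun hrel 0)
  have h1 := norm_sq_le_of_eq_smul_sub hC htr (congrFun hrel 1)
  simp only [stateVec, cons_val_zero, cons_val_one] at h0 h1
  simp only [stateNormSq]
  linarith

end Transfer

theorem gordon_square_criterion_general
    (lam E : ℝ) (w : List ℕ)
    (k : ℕ) (hk : w.length = k)
    (l : ℕ) (hlk : l ≤ k)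
    (f : ℤ → ℕ)
    (hsquares : ∀ j : ℤ, 1 ≤ j → j ≤ (l : ℤ) →
      ∃ i : ℕ, (List.ofFn fun m : Fin (2 * k) => f (j + (m : ℕ))) =
        (w.rotate i) ++ (w.rotate i))
    (C : ℝ) (hC : 1 ≤ C)
    (htr : ∀ i : ℕ, |(Mword lam E (w.rotate i)).trace| ≤ C)
    (u : ℤ → ℂ)
    (hsol : ∀ n : ℤ, u (n + 1) + u (n - 1) + (lam : ℂ) * (f n : ℂ) * u n
      = (E : ℂ) * u n) :
    (1 + 1 / (4 * C ^ 2)) *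
      (∑ n ∈ Finset.Icc (1 : ℤ) (l : ℤ),
        (‖u n‖ ^ 2 + ‖u (n - 1)‖ ^ 2)) ≤
    ∑ n ∈ Finset.Icc (1 : ℤ) ((l : ℤ) + 2 * (k : ℤ)),
      (‖u n‖ ^ 2 + ‖u (n - 1)‖ ^ 2) := by
  change (1 + 1 / (4 * C ^ 2)) * ∑ n ∈ Icc 1 (l : ℤ), stateNormSq u n ≤
    ∑ n ∈ Icc 1 ((l : ℤ) + 2 * k), stateNormSq u n
  have hnonneg (n : ℤ) : 0 ≤ stateNormSq u n := by unfold stateNormSq; positivity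
  have hbound : ∑ n ∈ Icc 1 (l : ℤ), stateNormSq u n ≤
      2 * C ^ 2 * ∑ n ∈ Icc ((l : ℤ) + 1) (l + 2 * k), stateNormSq u n := by
    refine sum_Icc_le_mul_sum_Icc_of_le_shifts hnonneg (by positivity) (by omega) ?_
    intro j hj
    rw [mem_Icc] at hj
    obtain ⟨i, hi⟩ := hsquares j hj.1 hj.2
    have hlen : (w.rotate i).length = k := by rw [List.length_rotate, hk]
    rw [← hlen] at hi ⊢
    exact stateNormSq_le_of_square hsol hC (htr i) hi
  rw [← sum_Icc_add_sum_Icc_succ (b := (l : ℤ)) (c := l + 2 * k) (by omega) (by omega)]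
  have hC2 : 0 < 4 * C ^ 2 := by positivity
  rw [add_mul, one_mul, one_div_mul_eq_div, add_le_add_iff_left, div_le_iff₀ hC2]
  nlinarith [sum_nonneg fun n (_ : n ∈ Icc ((l : ℤ) + 1) (l + 2 * k)) => hnonneg n, sq_nonneg C]

theorem gordon_square_criterion
    (lam E : ℝ) (w : List ℕ) (hw01 : ∀ c ∈ w, c = 0 ∨ c = 1)
    (k : ℕ) (hk : w.length = k) (hkpos : 1 ≤ k)
    (l : ℕ) (hl1 : 1 ≤ l) (hlk : l ≤ k)
    (f : ℤ → ℕ) (hf01 : ∀ n, f n = 0 ∨ f n = 1)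
    (hsquares : ∀ j : ℤ, 1 ≤ j → j ≤ (l : ℤ) →
      ∃ i : ℕ, (List.ofFn fun m : Fin (2 * k) => f (j + (m : ℕ))) =
        (w.rotate i) ++ (w.rotate i))
    (C : ℝ) (hC : 1 ≤ C)
    (htr : ∀ i : ℕ, |(Mword lam E (w.rotate i)).trace| ≤ C)
    (u : ℤ → ℂ)
    (hsol : ∀ n : ℤ, u (n + 1) + u (n - 1) + (lam : ℂ) * (f n : ℂ) * u n
      = (E : ℂ) * u n) :
    (1 + 1 / (4 * C ^ 2)) *
      (∑ n ∈ Finset.Icc (1 : ℤ) (l : ℤ),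
        (‖u n‖ ^ 2 + ‖u (n - 1)‖ ^ 2)) ≤
    ∑ n ∈ Finset.Icc (1 : ℤ) ((l : ℤ) + 2 * (k : ℤ)),
      (‖u n‖ ^ 2 + ‖u (n - 1)‖ ^ 2) :=
  gordon_square_criterion_general lam E w k hk l hlk f hsquares C hC htr u hsol
end
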